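/- Let p be a positive integer, let K : ℝ^p → ℝ be nonnegative, spherically symmetric, with ∫ (1 + ‖u‖₂⁸) K(u) du < ∞. Let m : ℝ^p → ℝ be five times continuously differentiable with bounded derivatives up to order five, and f : ℝ^p → ℝ be three times continuously differentiable with bounded derivatives up to order three. Fix x ∈ ℝ^p and define D_m³(x, u) = Σ_{i₁+⋯+i_p=3} (3!/(i₁!⋯i_p!)) (∂³m(x)/∂x₁^{i₁}⋯∂x_p^{i_p}) u₁^{i₁}⋯u_p^{i_p} and b(m) = ∫ u D_m³(x, u) K(u) du ∈ ℝ^p. Then, as h → 0⁺, the ℝ^p-valued integral ∫_{ℝ^p} u [ m(x + h u) − m(x) − h ∇m(x)ᵀ u ] K(u) f(x + h u) du equals h³ [ (1/2) ∫ u (uᵀ ∇²m(x) u)(∇f(x)ᵀ u) K(u) du + (1/6) f(x) b(m) ] + O(h⁵), componentwise. -/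

import Mathlib

/-!
Put `Φ(v) = (m(x+v) - m(x) - Dm(x) v) f(x+v)`, so that the integrand is `u_j Φ(hu) K(u)`. As `K`
is even and `u ↦ u_j` is odd, only the odd part `(Φ(v) - Φ(-v))/2` of `Φ` contributes. Multiplying
the Taylor expansions of `m` (to order 4, remainder `O(‖v‖⁵)`) and `f` (to order 2, remainder
`O(‖v‖³)`), this odd part is the cubic `D²m(x)[v,v] Df(x) v / 2 + D³m(x)[v,v,v] f(x) / 6` up to
`O(‖v‖⁵ + ‖v‖⁷)`. At `v = hu` the cubic is `h³` times the leading term, and for `h ≤ 1` the error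
is `h⁵ O(‖u‖⁵ + ‖u‖⁷)`, which stays integrable against `|u_j| K(u)` thanks to the eighth moment.
-/

open MeasureTheory Asymptotics Finset Nat

variable {E : Type*} [NormedAddCommGroup E] [NormedSpace ℝ E]

theorem norm_sub_sum_iteratedFDeriv_le {F : Type*} [NormedAddCommGroup F] [NormedSpace ℝ F]
    [CompleteSpace F] {f : E → F} {n : ℕ} {M : ℝ} (hf : ContDiff ℝ (n + 1) f)
    (hM : ∀ y, ‖iteratedFDeriv ℝ (n + 1) f y‖ ≤ M) (x y : E) :
    ‖f (x + y) - ∑ k ∈ range (n + 1), (k ! : ℝ)⁻¹ • iteratedFDeriv ℝ k f x (fun _ ↦ y)‖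
      ≤ M * ‖y‖ ^ (n + 1) := by
  rw [map_add_eq_sum_add_integral_iteratedFDeriv fun t _ ↦ hf.contDiffAt, add_sub_cancel_left,
    norm_smul]
  have hint : ‖∫ t in (0 : ℝ)..1, (1 - t) ^ n • iteratedFDeriv ℝ (n + 1) f (x + t • y) (fun _ ↦ y)‖
      ≤ M * ‖y‖ ^ (n + 1) * |1 - 0| := by
    refine intervalIntegral.norm_integral_le_of_norm_le_const fun t ht ↦ ?_
    rw [Set.uIoc_of_le zero_le_one] at ht
    have h1t : ‖(1 - t) ^ n‖ ≤ 1 := by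
      rw [norm_pow, Real.norm_of_nonneg (by linarith [ht.2])]
      exact pow_le_one₀ (by linarith [ht.2]) (by linarith [ht.1])
    calc _ ≤ 1 * (M * ‖y‖ ^ (n + 1)) := by
          rw [norm_smul]
          gcongr
          exact ((iteratedFDeriv ℝ (n + 1) f (x + t • y)).le_opNorm_mul_pow_of_le
            (pi_norm_const_le y)).trans (by gcongr; exact hM _)
      _ = _ := one_mul _
  have hfac : ‖((n ! : ℝ))⁻¹‖ ≤ 1 := by
    rw [norm_inv, Real.norm_natCast]
    exact inv_le_one_of_one_le₀ (by exact_mod_cast n.factorial_pos)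
  calc _ ≤ 1 * (M * ‖y‖ ^ (n + 1)) :=
        mul_le_mul hfac (by simpa using hint) (norm_nonneg _) zero_le_one
    _ = _ := one_mul _

theorem isBigO_sub_sum_iteratedFDeriv {f : E → ℝ} {n : ℕ} {M : ℝ} (hf : ContDiff ℝ (n + 1) f)
    (hM : ∀ y, ‖iteratedFDeriv ℝ (n + 1) f y‖ ≤ M) (x : E) :
    (fun y ↦ f (x + y) - ∑ k ∈ range (n + 1), (k ! : ℝ)⁻¹ * iteratedFDeriv ℝ k f x (fun _ ↦ y))
      =O[⊤] fun y ↦ ‖y‖ ^ (n + 1) :=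
  .of_bound M <| .of_forall fun y ↦ by
    simpa [norm_pow] using norm_sub_sum_iteratedFDeriv_le hf hM x y

namespace ContinuousMultilinearMap

variable {k : ℕ} (A : ContinuousMultilinearMap ℝ (fun _ : Fin k ↦ E) ℝ)

theorem map_smul_diag (c : ℝ) (v : E) : A (fun _ ↦ c • v) = c ^ k * A (fun _ ↦ v) := by
  simpa using A.map_smul_univ (fun _ ↦ c) (fun _ ↦ v)

theorem map_neg_diag (v : E) : A (fun _ ↦ -v) = (-1) ^ k * A (fun _ ↦ v) := by
  rw [← map_smul_diag, neg_one_smul]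

theorem isBigO_diag : (fun v ↦ A (fun _ ↦ v)) =O[⊤] fun v ↦ ‖v‖ ^ k :=
  .of_bound ‖A‖ <| .of_forall fun v ↦ by
    simpa [norm_pow] using A.le_opNorm_mul_pow_of_le (pi_norm_const_le v)

end ContinuousMultilinearMap

theorem ContinuousLinearMap.isBigO_norm_pow_one (L : E →L[ℝ] ℝ) :
    (fun v ↦ L v) =O[⊤] fun v ↦ ‖v‖ ^ 1 :=
  (L.isBigO_id ⊤).norm_right.congr_right fun _ ↦ (pow_one _).symm

theorem pow_le_pow_add_pow {r : ℝ} (hr : 0 ≤ r) {a k b : ℕ} (hak : a ≤ k) (hkb : k ≤ b) :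
    r ^ k ≤ r ^ a + r ^ b := by
  rcases le_total r 1 with h | h
  · linarith [pow_le_pow_of_le_one hr h hak, pow_nonneg hr b]
  · linarith [pow_le_pow_right₀ h hkb, pow_nonneg hr a]

theorem isBigO_pow_add_pow {F : Type*} [SeminormedAddCommGroup F] {a k b : ℕ} (hak : a ≤ k)
    (hkb : k ≤ b) : (fun v : F ↦ ‖v‖ ^ k) =O[⊤] fun v ↦ ‖v‖ ^ a + ‖v‖ ^ b :=
  .of_bound' <| .of_forall fun v ↦ by
    simpa [norm_pow, abs_of_nonneg (by positivity : 0 ≤ ‖v‖ ^ a + ‖v‖ ^ b)] using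
      pow_le_pow_add_pow (norm_nonneg v) hak hkb

theorem isBigO_one_add_pow {F : Type*} [SeminormedAddCommGroup F] {k n : ℕ} (hk : k ≤ n) :
    (fun v : F ↦ ‖v‖ ^ k) =O[⊤] fun v ↦ 1 + ‖v‖ ^ n := by
  simpa using isBigO_pow_add_pow (F := F) (zero_le k) hk

theorem Asymptotics.IsBigO.mul_norm_pow {α : Type*} {l : Filter α} {F : Type*} [Norm F]
    {f g : α → ℝ} {w : α → F} {i j : ℕ}
    (hf : f =O[l] fun v ↦ ‖w v‖ ^ i) (hg : g =O[l] fun v ↦ ‖w v‖ ^ j) :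
    (fun v ↦ f v * g v) =O[l] fun v ↦ ‖w v‖ ^ (i + j) := by
  simpa only [pow_add] using hf.mul hg

theorem Asymptotics.IsBigO.sub_comp_neg {α : Type*} [Neg α] {f g : α → ℝ} (hf : f =O[⊤] g)
    (hg : ∀ v, ‖g (-v)‖ = ‖g v‖) : (fun v ↦ f v - f (-v)) =O[⊤] g :=
  hf.sub <| (hf.comp_tendsto (k := fun v ↦ -v) Filter.tendsto_top).trans <|
    .of_bound' <| .of_forall fun v ↦ (hg v).le

theorem isBigO_oddPart_sub_cubic {m f Φ : E → ℝ} {M₅ F₁ F₃ : ℝ} (hm : ContDiff ℝ 5 m)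
    (hm₅ : ∀ y, ‖iteratedFDeriv ℝ 5 m y‖ ≤ M₅) (hf : ContDiff ℝ 3 f)
    (hf₁ : ∀ y, ‖iteratedFDeriv ℝ 1 f y‖ ≤ F₁) (hf₃ : ∀ y, ‖iteratedFDeriv ℝ 3 f y‖ ≤ F₃) (x : E)
    (hΦ : ∀ v, Φ v = (m (x + v) - m x - fderiv ℝ m x v) * f (x + v)) :
    (fun v ↦ Φ v - Φ (-v) - 2 * (iteratedFDeriv ℝ 2 m x (fun _ ↦ v) / 2 * fderiv ℝ f x v
        + iteratedFDeriv ℝ 3 m x (fun _ ↦ v) / 6 * f x))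
      =O[⊤] fun v ↦ ‖v‖ ^ 5 + ‖v‖ ^ 7 := by
  set a : ℕ → E → ℝ := fun k v ↦ iteratedFDeriv ℝ k m x (fun _ ↦ v)
  set b : ℕ → E → ℝ := fun k v ↦ iteratedFDeriv ℝ k f x (fun _ ↦ v)
  have ha (k : ℕ) : a k =O[⊤] fun v ↦ ‖v‖ ^ k := (iteratedFDeriv ℝ k m x).isBigO_diag
  have hb (k : ℕ) : b k =O[⊤] fun v ↦ ‖v‖ ^ k := (iteratedFDeriv ℝ k f x).isBigO_diag
  set R : E → ℝ := fun v ↦ m (x + v) - m x - fderiv ℝ m x v - (a 2 v / 2 + a 3 v / 6 + a 4 v / 24)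
  set U : E → ℝ := fun v ↦ f (x + v) - f x
  set W : E → ℝ := fun v ↦ f (x + v) - (f x + fderiv ℝ f x v + b 2 v / 2)
  have hR : R =O[⊤] fun v ↦ ‖v‖ ^ 5 := by
    refine (isBigO_sub_sum_iteratedFDeriv (n := 4) hm hm₅ x).congr_left fun v ↦ ?_
    simp [R, a, sum_range_succ, factorial]
    ring
  have hU : U =O[⊤] fun v ↦ ‖v‖ ^ 1 := by
    refine (isBigO_sub_sum_iteratedFDeriv (n := 0) (hf.of_le (by norm_num)) hf₁ x).congr_left
      fun v ↦ ?_
    simp [U]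
  have hW : W =O[⊤] fun v ↦ ‖v‖ ^ 3 := by
    refine (isBigO_sub_sum_iteratedFDeriv (n := 2) hf hf₃ x).congr_left fun v ↦ ?_
    simp [W, b, sum_range_succ, factorial]
    ring
  set e : E → ℝ := fun v ↦ R v * U v + f x * R v + 2⁻¹ * (a 2 v * W v)
    + 6⁻¹ * (a 3 v * W v) + 24⁻¹ * (a 4 v * W v)
  have lift {g : E → ℝ} {k : ℕ} (h5 : 5 ≤ k) (h7 : k ≤ 7) (hg : g =O[⊤] fun v ↦ ‖v‖ ^ k) :
      g =O[⊤] fun v ↦ ‖v‖ ^ 5 + ‖v‖ ^ 7 :=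
    hg.trans (isBigO_pow_add_pow h5 h7)
  have he : e =O[⊤] fun v ↦ ‖v‖ ^ 5 + ‖v‖ ^ 7 :=
    ((((lift (by norm_num) (by norm_num) (hR.mul_norm_pow hU)).add
      (lift (by norm_num) (by norm_num) (hR.const_mul_left _))).add
      (lift (by norm_num) (by norm_num) (((ha 2).mul_norm_pow hW).const_mul_left _))).add
      (lift (by norm_num) (by norm_num) (((ha 3).mul_norm_pow hW).const_mul_left _))).add
      (lift (by norm_num) (by norm_num) (((ha 4).mul_norm_pow hW).const_mul_left _))
  -- `Φ = e + T S` for the Taylor polynomials `T`, `S` of the two factors, and the odd part of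
  -- `T S` is the cubic plus the two degree-5 products below.
  refine ((he.sub_comp_neg fun v ↦ by simp).add ((lift (by norm_num) (by norm_num)
    (((ha 3).mul_norm_pow (hb 2)).const_mul_left 6⁻¹)).add
    (lift (by norm_num) (by norm_num) (((ha 4).mul_norm_pow
      (fderiv ℝ f x).isBigO_norm_pow_one).const_mul_left 12⁻¹)))).congr_left fun v ↦ ?_
  simp only [e, R, U, W, a, b, hΦ, map_neg, ContinuousMultilinearMap.map_neg_diag]
  ring

theorem isBigO_increment_mul {m f Φ : E → ℝ} {M₁ F₁ : ℝ} (hm : ContDiff ℝ 1 m)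
    (hm₁ : ∀ y, ‖iteratedFDeriv ℝ 1 m y‖ ≤ M₁) (hf : ContDiff ℝ 1 f)
    (hf₁ : ∀ y, ‖iteratedFDeriv ℝ 1 f y‖ ≤ F₁) (x : E)
    (hΦ : ∀ v, Φ v = (m (x + v) - m x - fderiv ℝ m x v) * f (x + v)) :
    Φ =O[⊤] fun v ↦ ‖v‖ ^ 1 + ‖v‖ ^ 2 := by
  have hφ : (fun v ↦ m (x + v) - m x - fderiv ℝ m x v) =O[⊤] fun v ↦ ‖v‖ ^ 1 :=
    ((isBigO_sub_sum_iteratedFDeriv (n := 0) hm hm₁ x).sub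
      (fderiv ℝ m x).isBigO_norm_pow_one).congr_left fun v ↦ by simp
  have hU : (fun v ↦ f (x + v) - f x) =O[⊤] fun v ↦ ‖v‖ ^ 1 :=
    (isBigO_sub_sum_iteratedFDeriv (n := 0) hf hf₁ x).congr_left fun v ↦ by simp
  refine (((hφ.const_mul_left (f x)).trans (isBigO_pow_add_pow le_rfl (by norm_num))).add
    ((hφ.mul_norm_pow hU).trans (isBigO_pow_add_pow (by norm_num) le_rfl))).congr_left
    fun v ↦ by rw [hΦ]; ring

theorem exists_abs_mul_comp_smul_le {Ψ : E → ℝ} {a b : ℕ}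
    (hΨ : Ψ =O[⊤] fun v ↦ ‖v‖ ^ a + ‖v‖ ^ b) (hab : a ≤ b) (hb : b < 8) :
    ∃ C, ∀ (ℓ : E →L[ℝ] ℝ) (h : ℝ), 0 ≤ h → h ≤ 1 → ∀ u,
      |ℓ u * Ψ (h • u)| ≤ C * ‖ℓ‖ * h ^ a * (1 + ‖u‖ ^ 8) := by
  obtain ⟨C, hC0, hC⟩ := hΨ.exists_nonneg
  rw [isBigOWith_top] at hC
  refine ⟨2 * C, fun ℓ h h0 h1 u ↦ ?_⟩
  have hΨu : |Ψ (h • u)| ≤ C * h ^ a * (‖u‖ ^ a + ‖u‖ ^ b) := by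
    have hba : h ^ b ≤ h ^ a := pow_le_pow_of_le_one h0 h1 hab
    have := hC (h • u)
    rw [Real.norm_eq_abs, Real.norm_of_nonneg (by positivity), norm_smul, Real.norm_of_nonneg h0,
      mul_pow, mul_pow] at this
    refine this.trans ?_
    rw [mul_assoc]
    gcongr
    nlinarith [pow_nonneg (norm_nonneg u) b, pow_nonneg h0 a]
  have hw : ‖u‖ * (‖u‖ ^ a + ‖u‖ ^ b) ≤ 2 * (1 + ‖u‖ ^ 8) := by
    have ha := pow_le_pow_add_pow (norm_nonneg u) (zero_le (a + 1)) (by omega : a + 1 ≤ 8)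
    have hb := pow_le_pow_add_pow (norm_nonneg u) (zero_le (b + 1)) (by omega : b + 1 ≤ 8)
    simp only [pow_zero, pow_succ] at ha hb ⊢
    nlinarith
  calc |ℓ u * Ψ (h • u)| ≤ (‖ℓ‖ * ‖u‖) * (C * h ^ a * (‖u‖ ^ a + ‖u‖ ^ b)) := by
        rw [abs_mul, ← Real.norm_eq_abs]
        gcongr
        exact ℓ.le_opNorm u
    _ = C * ‖ℓ‖ * h ^ a * (‖u‖ * (‖u‖ ^ a + ‖u‖ ^ b)) := by ring
    _ ≤ C * ‖ℓ‖ * h ^ a * (2 * (1 + ‖u‖ ^ 8)) := by gcongr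
    _ = 2 * C * ‖ℓ‖ * h ^ a * (1 + ‖u‖ ^ 8) := by ring

section Integration

variable {α : Type*} [MeasurableSpace α] {μ : Measure α}

theorem aestronglyMeasurable_of_integrable_mul [TopologicalSpace α] [OpensMeasurableSpace α]
    {w K : α → ℝ} (hw : Continuous w) (hw0 : ∀ u, w u ≠ 0)
    (hK : Integrable (fun u ↦ w u * K u) μ) : AEStronglyMeasurable K μ :=
  (hK.aestronglyMeasurable.mul (hw.inv₀ hw0).aestronglyMeasurable).congr <| .of_forall fun u ↦ by
    simp [mul_comm (w u), hw0 u]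

theorem MeasureTheory.Integrable.mul_of_isBigO {w K g : α → ℝ}
    (hK : Integrable (fun u ↦ w u * K u) μ) (hKm : AEStronglyMeasurable K μ)
    (hgm : AEStronglyMeasurable g μ) (hg : g =O[⊤] w) :
    Integrable (fun u ↦ g u * K u) μ := by
  obtain ⟨C, hC⟩ := isBigO_top.1 hg
  refine Integrable.mono' (hK.norm.const_mul C) (hgm.mul hKm) (.of_forall fun u ↦ ?_)
  rw [norm_mul, norm_mul, ← mul_assoc]
  exact mul_le_mul_of_nonneg_right (hC u) (norm_nonneg _)

theorem abs_integral_mul_le {w K F : α → ℝ} {B : ℝ} (hw : ∀ u, 0 ≤ w u)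
    (hK : Integrable (fun u ↦ w u * K u) μ) (hF : ∀ u, |F u| ≤ B * w u) :
    |∫ u, F u * K u ∂μ| ≤ B * ∫ u, w u * |K u| ∂μ := by
  rw [← integral_const_mul, ← Real.norm_eq_abs]
  refine norm_integral_le_of_norm_le ((hK.norm.const_mul B).congr (.of_forall fun u ↦ ?_))
    (.of_forall fun u ↦ ?_)
  · simp [abs_of_nonneg (hw u)]
  · rw [norm_mul, Real.norm_eq_abs, Real.norm_eq_abs, ← mul_assoc]
    exact mul_le_mul_of_nonneg_right (hF u) (abs_nonneg _)

theorem two_mul_integral_mul_eq_integral_add_comp_neg [AddGroup α] [MeasurableNeg α]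
    [μ.IsNegInvariant] {K g : α → ℝ} (hK : ∀ u, K (-u) = K u)
    (hg : Integrable (fun u ↦ g u * K u) μ) :
    2 * ∫ u, g u * K u ∂μ = ∫ u, (g u + g (-u)) * K u ∂μ := by
  have hneg : Integrable (fun u ↦ g (-u) * K u) μ := by simpa [hK] using hg.comp_neg
  have hswap : ∫ u, g (-u) * K u ∂μ = ∫ u, g u * K u ∂μ := by
    simpa [hK] using integral_neg_eq_self (fun u ↦ g u * K u) μ
  simp_rw [add_mul]
  rw [integral_add hg hneg, hswap]
  ring

theorem abs_integral_mul_sub_le_of_even [AddGroup α] [MeasurableNeg α] [μ.IsNegInvariant]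
    {w K g p : α → ℝ} {B : ℝ} (hK_even : ∀ u, K (-u) = K u) (hp_even : ∀ u, p (-u) = p u)
    (hw : ∀ u, 0 ≤ w u) (hK : Integrable (fun u ↦ w u * K u) μ)
    (hg : Integrable (fun u ↦ g u * K u) μ) (hp : Integrable (fun u ↦ p u * K u) μ)
    (hB : ∀ u, |g u + g (-u) - 2 * p u| ≤ B * w u) :
    |∫ u, g u * K u ∂μ - ∫ u, p u * K u ∂μ| ≤ B / 2 * ∫ u, w u * |K u| ∂μ := by
  have hsym := two_mul_integral_mul_eq_integral_add_comp_neg hK_even (g := fun u ↦ g u - p u)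
    (by simp only [sub_mul]; exact hg.sub hp)
  have hdiff : ∫ u, g u * K u ∂μ - ∫ u, p u * K u ∂μ
      = (∫ u, (g u + g (-u) - 2 * p u) * K u ∂μ) / 2 := by
    rw [← integral_sub hg hp, eq_div_iff two_ne_zero, mul_comm]
    simp only [← sub_mul, hsym, hp_even]
    congr 1 with u
    ring
  rw [hdiff, abs_div, abs_two, div_le_iff₀ two_pos]
  linarith [abs_integral_mul_le hw hK hB]

end Integration

theorem integral_mul_cubic_smul [MeasurableSpace E] [OpensMeasurableSpace E] {μ : Measure E}
    {K : E → ℝ} (hK : Integrable (fun u ↦ (1 + ‖u‖ ^ 8) * K u) μ) (hKm : AEStronglyMeasurable K μ)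
    (ℓ L : E →L[ℝ] ℝ) (A : ContinuousMultilinearMap ℝ (fun _ : Fin 2 ↦ E) ℝ)
    (B : ContinuousMultilinearMap ℝ (fun _ : Fin 3 ↦ E) ℝ) (c h : ℝ) :
    Integrable (fun u ↦ ℓ u * (A (fun _ ↦ h • u) / 2 * L (h • u) + B (fun _ ↦ h • u) / 6 * c)
        * K u) μ ∧
      ∫ u, ℓ u * (A (fun _ ↦ h • u) / 2 * L (h • u) + B (fun _ ↦ h • u) / 6 * c) * K u ∂μ
        = h ^ 3 * ((1 / 2) * (∫ u, ℓ u * A (fun _ ↦ u) * L u * K u ∂μ)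
          + (1 / 6) * c * (∫ u, ℓ u * B (fun _ ↦ u) * K u ∂μ)) := by
  have hA : Integrable (fun u ↦ ℓ u * A (fun _ ↦ u) * L u * K u) μ :=
    hK.mul_of_isBigO hKm (by fun_prop) <| ((ℓ.isBigO_norm_pow_one.mul_norm_pow A.isBigO_diag)
      |>.mul_norm_pow L.isBigO_norm_pow_one).trans (isBigO_one_add_pow (by norm_num))
  have hB : Integrable (fun u ↦ ℓ u * B (fun _ ↦ u) * K u) μ :=
    hK.mul_of_isBigO hKm (by fun_prop) <| (ℓ.isBigO_norm_pow_one.mul_norm_pow B.isBigO_diag).trans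
      (isBigO_one_add_pow (by norm_num))
  have hexpand (u : E) :
      ℓ u * (A (fun _ ↦ h • u) / 2 * L (h • u) + B (fun _ ↦ h • u) / 6 * c) * K u
        = h ^ 3 * (1 / 2) * (ℓ u * A (fun _ ↦ u) * L u * K u)
          + h ^ 3 * (1 / 6) * c * (ℓ u * B (fun _ ↦ u) * K u) := by
    simp only [ContinuousMultilinearMap.map_smul_diag, map_smul, smul_eq_mul]
    ring
  simp only [hexpand]
  refine ⟨(hA.const_mul _).add (hB.const_mul _), ?_⟩
  rw [integral_add (hA.const_mul _) (hB.const_mul _), integral_const_mul, integral_const_mul]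
  ring

theorem exists_abs_integral_bias_sub_le [MeasurableSpace E] [BorelSpace E] {μ : Measure E}
    [μ.IsNegInvariant] {K m f : E → ℝ} {M₁ M₅ F₁ F₃ : ℝ} (hK_even : ∀ u, K (-u) = K u)
    (hK : Integrable (fun u ↦ (1 + ‖u‖ ^ 8) * K u) μ) (hm : ContDiff ℝ 5 m)
    (hm₁ : ∀ y, ‖iteratedFDeriv ℝ 1 m y‖ ≤ M₁) (hm₅ : ∀ y, ‖iteratedFDeriv ℝ 5 m y‖ ≤ M₅)
    (hf : ContDiff ℝ 3 f) (hf₁ : ∀ y, ‖iteratedFDeriv ℝ 1 f y‖ ≤ F₁)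
    (hf₃ : ∀ y, ‖iteratedFDeriv ℝ 3 f y‖ ≤ F₃) (x : E) :
    ∃ C, ∀ (ℓ : E →L[ℝ] ℝ) (h : ℝ), 0 ≤ h → h ≤ 1 →
      |(∫ u, ℓ u * (m (x + h • u) - m x - h * fderiv ℝ m x u) * K u * f (x + h • u) ∂μ) -
          h ^ 3 * ((1 / 2) * (∫ u, ℓ u * iteratedFDeriv ℝ 2 m x (fun _ ↦ u) * fderiv ℝ f x u
              * K u ∂μ) +
            (1 / 6) * f x * (∫ u, ℓ u * iteratedFDeriv ℝ 3 m x (fun _ ↦ u) * K u ∂μ))|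
        ≤ C * ‖ℓ‖ * h ^ 5 := by
  set Φ : E → ℝ := fun v ↦ (m (x + v) - m x - fderiv ℝ m x v) * f (x + v)
  obtain ⟨C₁, hC₁⟩ := exists_abs_mul_comp_smul_le
    (isBigO_oddPart_sub_cubic hm hm₅ hf hf₁ hf₃ x fun _ ↦ rfl) (by norm_num) (by norm_num)
  obtain ⟨C₂, hC₂⟩ := exists_abs_mul_comp_smul_le (isBigO_increment_mul (hm.of_le (by norm_num))
    hm₁ (hf.of_le (by norm_num)) hf₁ x fun _ ↦ rfl) (by norm_num) (by norm_num)
  have hKm := aestronglyMeasurable_of_integrable_mul (by fun_prop) (fun u ↦ by positivity) hK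
  have hmc := hm.continuous
  have hfc := hf.continuous
  refine ⟨C₁ * (∫ u, (1 + ‖u‖ ^ 8) * |K u| ∂μ) / 2, fun ℓ h h0 h1 ↦ ?_⟩
  have hG : Integrable (fun u ↦ ℓ u * Φ (h • u) * K u) μ :=
    hK.mul_of_isBigO hKm (by fun_prop) <| .of_bound (C₂ * ‖ℓ‖ * h ^ 1) <| .of_forall fun u ↦ by
      rw [Real.norm_eq_abs, Real.norm_of_nonneg (by positivity)]
      exact hC₂ ℓ h h0 h1 u
  have hlhs : ∫ u, ℓ u * (m (x + h • u) - m x - h * fderiv ℝ m x u) * K u * f (x + h • u) ∂μ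
      = ∫ u, ℓ u * Φ (h • u) * K u ∂μ := by
    congr 1 with u
    simp only [Φ, map_smul, smul_eq_mul]
    ring
  obtain ⟨hP, hrhs⟩ := integral_mul_cubic_smul hK hKm ℓ (fderiv ℝ f x) (iteratedFDeriv ℝ 2 m x)
    (iteratedFDeriv ℝ 3 m x) (f x) h
  rw [hlhs, ← hrhs]
  refine (abs_integral_mul_sub_le_of_even (B := C₁ * ‖ℓ‖ * h ^ 5) hK_even (fun u ↦ ?_)
    (fun u ↦ by positivity) hK hG hP fun u ↦ ?_).trans_eq (by ring)
  · simp only [map_neg, smul_neg, ContinuousMultilinearMap.map_neg_diag]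
    ring
  · convert hC₁ ℓ h h0 h1 u using 2
    simp only [Φ, map_neg, smul_neg]
    ring

theorem sq_norm_le_sum_sq {ι : Type*} [Fintype ι] (u : ι → ℝ) : ‖u‖ ^ 2 ≤ ∑ i, u i ^ 2 := by
  have hsum : 0 ≤ ∑ i, u i ^ 2 := by positivity
  refine (Real.le_sqrt (norm_nonneg u) hsum).1 <| (pi_norm_le_iff_of_nonneg (by positivity)).2
    fun i ↦ ?_
  rw [Real.norm_eq_abs]
  exact Real.abs_le_sqrt (single_le_sum (fun j _ ↦ sq_nonneg (u j)) (mem_univ i))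

theorem integrable_one_add_norm_pow_mul {ι : Type*} [Fintype ι] {μ : Measure (ι → ℝ)}
    {K : (ι → ℝ) → ℝ} (hK : Integrable (fun u ↦ (1 + (∑ i, u i ^ 2) ^ 4) * K u) μ) :
    Integrable (fun u ↦ (1 + ‖u‖ ^ 8) * K u) μ := by
  have hKm := aestronglyMeasurable_of_integrable_mul (by fun_prop) (fun u ↦ by positivity) hK
  refine hK.mono ((by fun_prop : Continuous fun u : ι → ℝ ↦ 1 + ‖u‖ ^ 8)
    |>.aestronglyMeasurable.mul hKm) (.of_forall fun u ↦ ?_)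
  rw [norm_mul, norm_mul, Real.norm_of_nonneg (by positivity : (0 : ℝ) ≤ 1 + ‖u‖ ^ 8),
    Real.norm_of_nonneg (by positivity : (0 : ℝ) ≤ 1 + (∑ i, u i ^ 2) ^ 4)]
  gcongr (1 + ?_) * _
  calc ‖u‖ ^ 8 = (‖u‖ ^ 2) ^ 4 := by ring
    _ ≤ (∑ i, u i ^ 2) ^ 4 := by gcongr; exact sq_norm_le_sum_sq u

theorem stmt9_general (p : ℕ)
    (K : (Fin p → ℝ) → ℝ)
    (k : ℝ → ℝ) (hK_sym : ∀ u, K u = k (Real.sqrt (∑ i, u i ^ 2)))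
    (hK_int : Integrable (fun u : Fin p → ℝ => (1 + (∑ i, u i ^ 2) ^ 4) * K u) volume)
    (m : (Fin p → ℝ) → ℝ) (hm : ContDiff ℝ 5 m)
    (hm_bdd : ∀ i : ℕ, 1 ≤ i → i ≤ 5 → ∃ C, ∀ y, ‖iteratedFDeriv ℝ i m y‖ ≤ C)
    (f : (Fin p → ℝ) → ℝ) (hf : ContDiff ℝ 3 f)
    (hf_bdd : ∀ i : ℕ, 1 ≤ i → i ≤ 3 → ∃ C, ∀ y, ‖iteratedFDeriv ℝ i f y‖ ≤ C)
    (x : Fin p → ℝ) :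
    ∃ C > 0, ∃ h₀ > 0, ∀ h : ℝ, 0 < h → h ≤ h₀ → ∀ j : Fin p,
      |(∫ u : Fin p → ℝ,
          u j * (m (x + h • u) - m x - h * fderiv ℝ m x u) * K u * f (x + h • u)) -
          h ^ 3 *
            ((1 / 2) * (∫ u : Fin p → ℝ,
                u j * iteratedFDeriv ℝ 2 m x ![u, u] * fderiv ℝ f x u * K u) +
              (1 / 6) * f x *
                (∫ u : Fin p → ℝ, u j * iteratedFDeriv ℝ 3 m x ![u, u, u] * K u))|
        ≤ C * h ^ 5 := by
  obtain ⟨M₁, hM₁⟩ := hm_bdd 1 le_rfl (by norm_num)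
  obtain ⟨M₅, hM₅⟩ := hm_bdd 5 (by norm_num) le_rfl
  obtain ⟨F₁, hF₁⟩ := hf_bdd 1 le_rfl (by norm_num)
  obtain ⟨F₃, hF₃⟩ := hf_bdd 3 (by norm_num) le_rfl
  have hK_even (u : Fin p → ℝ) : K (-u) = K u := by simp [hK_sym]
  obtain ⟨C, hC⟩ := exists_abs_integral_bias_sub_le hK_even
    (integrable_one_add_norm_pow_mul hK_int) hm hM₁ hM₅ hf hF₁ hF₃ x
  refine ⟨|C| + 1, by positivity, 1, one_pos, fun h h0 h1 j ↦ ?_⟩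
  have hproj : ‖(ContinuousLinearMap.proj j : (Fin p → ℝ) →L[ℝ] ℝ)‖ ≤ 1 :=
    ContinuousLinearMap.opNorm_le_bound _ zero_le_one fun u ↦ by simpa using norm_le_pi_norm u j
  simp only [Matrix.vec_single_eq_const, Matrix.vecCons_const]
  calc _ ≤ C * ‖(ContinuousLinearMap.proj j : (Fin p → ℝ) →L[ℝ] ℝ)‖ * h ^ 5 :=
        hC _ h h0.le h1
    _ ≤ (|C| + 1) * h ^ 5 := by
        gcongr
        nlinarith [le_abs_self C, abs_nonneg C, norm_nonneg
          (ContinuousLinearMap.proj j : (Fin p → ℝ) →L[ℝ] ℝ)]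

/-- Leading bias term of the gradient components: as `h → 0⁺`,
componentwise,
`∫ u [m(x+hu) − m(x) − h ∇m(x)ᵀu] K(u) f(x+hu) du
  = h³ [ (1/2) ∫ u (uᵀ∇²m(x)u)(∇f(x)ᵀu) K(u) du + (1/6) f(x) b(m) ] + O(h⁵)`,
where `D_m³(x,u)` is the third-order term of the Taylor expansion of `m`
(the third derivative of `m` at `x` evaluated at `(u,u,u)`) and
`b(m) = ∫ u D_m³(x,u) K(u) du`. -/
theorem stmt9 (p : ℕ) (hp : 0 < p)
    (K : (Fin p → ℝ) → ℝ) (hK_nonneg : ∀ u, 0 ≤ K u)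
    (k : ℝ → ℝ) (hK_sym : ∀ u, K u = k (Real.sqrt (∑ i, u i ^ 2)))
    (hK_int : Integrable (fun u : Fin p → ℝ => (1 + (∑ i, u i ^ 2) ^ 4) * K u) volume)
    (m : (Fin p → ℝ) → ℝ) (hm : ContDiff ℝ 5 m)
    (hm_bdd : ∀ i : ℕ, 1 ≤ i → i ≤ 5 → ∃ C, ∀ y, ‖iteratedFDeriv ℝ i m y‖ ≤ C)
    (f : (Fin p → ℝ) → ℝ) (hf : ContDiff ℝ 3 f)
    (hf_bdd : ∀ i : ℕ, 1 ≤ i → i ≤ 3 → ∃ C, ∀ y, ‖iteratedFDeriv ℝ i f y‖ ≤ C)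
    (x : Fin p → ℝ) :
    ∃ C > 0, ∃ h₀ > 0, ∀ h : ℝ, 0 < h → h ≤ h₀ → ∀ j : Fin p,
      |(∫ u : Fin p → ℝ,
          u j * (m (x + h • u) - m x - h * fderiv ℝ m x u) * K u * f (x + h • u)) -
          h ^ 3 *
            ((1 / 2) * (∫ u : Fin p → ℝ,
                u j * iteratedFDeriv ℝ 2 m x ![u, u] * fderiv ℝ f x u * K u) +
              (1 / 6) * f x *
                (∫ u : Fin p → ℝ, u j * iteratedFDeriv ℝ 3 m x ![u, u, u] * K u))|
        ≤ C * h ^ 5 :=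
  stmt9_general p K k hK_sym hK_int m hm hm_bdd f hf hf_bdd x
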